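/- (Proposition 3.4, estimate (3.50b), bounded-logarithm version.) For all real α, β ≥ 0 and fixed μ₁ ∈ [0,1] there exist constants C > 0 and σ₀ ∈ (0,1) such that for all σ ∈ (0,σ₀): ( ∫_{ℝ²}∫_{ℝ²} [ (ln(2+|q|))^α / (1+|ln(σ|q|)|)^β ]² · |ψ_in(q₁,q₂)|² dq₁ dq₂ )^{1/2} ≤ C·(ln(1/σ))^{−β}, where q := μ₂q₁ − μ₁q₂ with μ₂ := 1−μ₁. -/

import Mathlib

open MeasureTheory

noncomputable abbrev R2 : Type := EuclideanSpace ℝ (Fin 2)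

/-!
Writing `r = |q| > 0` (true off a null set), `log (1/σ) = -log (σ r) + log r` gives
`log (1/σ) ≤ (1 + |log (σ r)|) (1 + log (2 + r))`, so the weight is at most
`log (1/σ)^(-β) (1 + log (2 + r))^(α+β)`, uniformly in `σ ∈ (0,1)`. The remaining `σ`-free
integral is finite: `(1 + log (2 + r))^p ≤ exp (p (1 + r))` and `r ≤ |μ₂| |q₁| + |μ₁| |q₂|`,
and an exponential of a norm is absorbed by the Gaussian.
-/

open Real

lemma log_one_div_le_mul_one_add_log {σ r : ℝ} (hσ : 0 < σ) (hr : 0 < r) :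
    log (1 / σ) ≤ (1 + |log (σ * r)|) * (1 + log (2 + r)) := by
  have hlog_r : log r ≤ log (2 + r) := log_le_log hr (by linarith)
  have hlog_two_add : 0 ≤ log (2 + r) := log_nonneg (by linarith)
  have hneg : -log σ - log r ≤ |log (σ * r)| := by
    rw [log_mul hσ.ne' hr.ne']; linarith [neg_le_abs (log σ + log r)]
  rw [one_div, log_inv]
  nlinarith [mul_nonneg (abs_nonneg (log (σ * r))) hlog_two_add]

lemma log_two_add_rpow_div_le {α β σ r : ℝ} (hα : 0 ≤ α) (hβ : 0 ≤ β) (hσ₀ : 0 < σ) (hσ₁ : σ < 1)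
    (hr : 0 < r) :
    log (2 + r) ^ α / (1 + |log (σ * r)|) ^ β ≤
      log (1 / σ) ^ (-β) * (1 + log (2 + r)) ^ (α + β) := by
  have hL : 0 < log (1 / σ) := log_pos (by rw [lt_div_iff₀ hσ₀]; linarith)
  have hℓ : 0 < log (2 + r) := log_pos (by linarith)
  have hB : 0 < 1 + |log (σ * r)| := by positivity
  have hkey : log (1 / σ) ^ β ≤ (1 + |log (σ * r)|) ^ β * (1 + log (2 + r)) ^ β := by
    rw [← mul_rpow hB.le (by positivity)]
    exact rpow_le_rpow hL.le (log_one_div_le_mul_one_add_log hσ₀ hr) hβ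
  have hnum : log (2 + r) ^ α ≤ (1 + log (2 + r)) ^ α := rpow_le_rpow hℓ.le (by linarith) hα
  rw [rpow_neg hL.le, ← div_eq_inv_mul,
    div_le_div_iff₀ (rpow_pos_of_pos hB β) (rpow_pos_of_pos hL β), rpow_add (by positivity)]
  calc log (2 + r) ^ α * log (1 / σ) ^ β
      ≤ (1 + log (2 + r)) ^ α * ((1 + |log (σ * r)|) ^ β * (1 + log (2 + r)) ^ β) := by
        gcongr
    _ = _ := by ring

lemma one_add_log_le_exp_sub_one {y : ℝ} (hy : 0 < y) : 1 + log y ≤ exp (y - 1) := by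
  linarith [log_le_sub_one_of_pos hy, add_one_le_exp (y - 1)]

lemma one_add_log_two_add_rpow_le {p r : ℝ} (hp : 0 ≤ p) (hr : 0 ≤ r) :
    (1 + log (2 + r)) ^ p ≤ exp (p * (1 + r)) := by
  have hbase : 0 ≤ 1 + log (2 + r) := by linarith [log_nonneg (by linarith : (1 : ℝ) ≤ 2 + r)]
  calc (1 + log (2 + r)) ^ p ≤ exp (2 + r - 1) ^ p :=
        rpow_le_rpow hbase (one_add_log_le_exp_sub_one (by linarith)) hp
    _ = exp (p * (1 + r)) := by rw [← exp_mul]; ring_nf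

lemma norm_smul_sub_smul_le {E : Type*} [SeminormedAddCommGroup E] [NormedSpace ℝ E]
    (a b : ℝ) (x y : E) : ‖a • x - b • y‖ ≤ |a| * ‖x‖ + |b| * ‖y‖ := by
  simpa only [norm_smul, Real.norm_eq_abs] using norm_sub_le (a • x) (b • y)

lemma sqrt_integral_sq_mul_le {X : Type*} [MeasurableSpace X] {μ : Measure X} {f g ρ : X → ℝ}
    {c : ℝ} (hc : 0 ≤ c) (hρ : ∀ x, 0 ≤ ρ x) (hf : ∀ x, 0 ≤ f x)
    (hfg : ∀ᵐ x ∂μ, f x ≤ c * g x) (hg : Integrable (fun x => g x ^ 2 * ρ x) μ) :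
    √(∫ x, f x ^ 2 * ρ x ∂μ) ≤ c * √(∫ x, g x ^ 2 * ρ x ∂μ) := by
  have hint : ∫ x, f x ^ 2 * ρ x ∂μ ≤ ∫ x, (c * g x) ^ 2 * ρ x ∂μ := by
    refine integral_mono_of_nonneg (Filter.Eventually.of_forall fun x => by
      have := hρ x; positivity) ?_ ?_
    · simpa only [mul_pow, mul_assoc] using hg.const_mul (c ^ 2)
    · filter_upwards [hfg] with x hx
      gcongr
      exacts [hρ x, hf x]
  calc √(∫ x, f x ^ 2 * ρ x ∂μ) ≤ √(∫ x, (c * g x) ^ 2 * ρ x ∂μ) := sqrt_le_sqrt hint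
    _ = c * √(∫ x, g x ^ 2 * ρ x ∂μ) := by
      simp only [mul_pow, mul_assoc, integral_const_mul, sqrt_mul (sq_nonneg c), sqrt_sq hc]

lemma ae_linearMap_ne_zero {E F : Type*} [NormedAddCommGroup E] [NormedSpace ℝ E]
    [MeasurableSpace E] [BorelSpace E] [FiniteDimensional ℝ E] [AddCommGroup F] [Module ℝ F]
    (μ : Measure E) [μ.IsAddHaarMeasure] {f : E →ₗ[ℝ] F} (hf : f ≠ 0) :
    ∀ᵐ x ∂μ, f x ≠ 0 := by
  have hker : LinearMap.ker f ≠ ⊤ := fun h => hf (LinearMap.ker_eq_top.1 h)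
  rw [ae_iff]
  simp only [ne_eq, not_not]
  exact Measure.addHaar_submodule μ _ hker

section Gaussian

variable {V : Type*} [NormedAddCommGroup V] [InnerProductSpace ℝ V] [FiniteDimensional ℝ V]
  [MeasurableSpace V] [BorelSpace V]

lemma integrable_exp_neg_sq_norm_div_two :
    Integrable (fun v : V => exp (-‖v‖ ^ 2 / 2)) := by
  refine (GaussianFourier.integrable_cexp_neg_mul_sq_norm_add (V := V) (b := (1 / 2 : ℂ))
    (by norm_num) 0 0).norm.congr (Filter.Eventually.of_forall fun v => ?_)
  simp only [Complex.norm_exp]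
  norm_num
  rw [← Complex.ofReal_pow, Complex.ofReal_re]
  ring_nf

lemma integrable_exp_mul_norm_mul_exp_neg_sq_norm (c : ℝ) :
    Integrable (fun v : V => exp (c * ‖v‖) * exp (-‖v‖ ^ 2)) := by
  refine (integrable_exp_neg_sq_norm_div_two.const_mul (exp (c ^ 2 / 2))).mono' (by fun_prop)
    (Filter.Eventually.of_forall fun v => ?_)
  rw [norm_of_nonneg (by positivity), ← exp_add, ← exp_add]
  exact exp_le_exp.2 (by nlinarith [sq_nonneg (‖v‖ - c)])

lemma integrable_one_add_log_rpow_sq_mul_gaussian_sq (a b : ℝ) {p : ℝ} (hp : 0 ≤ p) :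
    Integrable (fun x : V × V => ((1 + log (2 + ‖a • x.1 - b • x.2‖)) ^ p) ^ 2 *
      (π⁻¹ * exp (-‖x.1‖ ^ 2 / 2) * exp (-‖x.2‖ ^ 2 / 2)) ^ 2) := by
  have hdom : Integrable (fun x : V × V => (π⁻¹ ^ 2 * exp (2 * p)) *
      ((exp (2 * p * |a| * ‖x.1‖) * exp (-‖x.1‖ ^ 2)) *
        (exp (2 * p * |b| * ‖x.2‖) * exp (-‖x.2‖ ^ 2)))) := by
    rw [Measure.volume_eq_prod]
    exact ((integrable_exp_mul_norm_mul_exp_neg_sq_norm _).mul_prod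
      (integrable_exp_mul_norm_mul_exp_neg_sq_norm _)).const_mul _
  have hcont : Continuous fun x : V × V => ((1 + log (2 + ‖a • x.1 - b • x.2‖)) ^ p) ^ 2 *
      (π⁻¹ * exp (-‖x.1‖ ^ 2 / 2) * exp (-‖x.2‖ ^ 2 / 2)) ^ 2 := by
    have hlog : Continuous fun x : V × V => log (2 + ‖a • x.1 - b • x.2‖) :=
      (by fun_prop : Continuous fun x : V × V => 2 + ‖a • x.1 - b • x.2‖).log
        fun x => by positivity
    exact (((continuous_const.add hlog).rpow_const fun _ => Or.inr hp).pow 2).mul (by fun_prop)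
  refine hdom.mono' hcont.aestronglyMeasurable (Filter.Eventually.of_forall fun x => ?_)
  set r := ‖a • x.1 - b • x.2‖
  have hbase : 0 ≤ 1 + log (2 + r) := by
    linarith [log_nonneg (by linarith [norm_nonneg (a • x.1 - b • x.2)] : (1 : ℝ) ≤ 2 + r)]
  have hweight : ((1 + log (2 + r)) ^ p) ^ 2 ≤
      exp (2 * p + 2 * p * |a| * ‖x.1‖ + 2 * p * |b| * ‖x.2‖) := by
    calc ((1 + log (2 + r)) ^ p) ^ 2 ≤ exp (p * (1 + r)) ^ 2 := by
          gcongr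
          exact one_add_log_two_add_rpow_le hp (norm_nonneg _)
      _ = exp (2 * p + 2 * p * r) := by rw [← exp_nat_mul]; ring_nf
      _ ≤ _ := by
        have := mul_le_mul_of_nonneg_left (norm_smul_sub_smul_le a b x.1 x.2) hp
        exact exp_le_exp.2 (by linarith)
  rw [norm_of_nonneg (by positivity)]
  calc ((1 + log (2 + r)) ^ p) ^ 2 * (π⁻¹ * exp (-‖x.1‖ ^ 2 / 2) * exp (-‖x.2‖ ^ 2 / 2)) ^ 2
      = ((1 + log (2 + r)) ^ p) ^ 2 * (π⁻¹ ^ 2 * exp (-‖x.1‖ ^ 2) * exp (-‖x.2‖ ^ 2)) := by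
        simp only [mul_pow, ← exp_nat_mul]; ring_nf
    _ ≤ exp (2 * p + 2 * p * |a| * ‖x.1‖ + 2 * p * |b| * ‖x.2‖) *
        (π⁻¹ ^ 2 * exp (-‖x.1‖ ^ 2) * exp (-‖x.2‖ ^ 2)) := by gcongr
    _ = _ := by simp only [exp_add]; ring

lemma ae_smul_fst_sub_smul_snd_ne_zero [Nontrivial V] {a b : ℝ} (hab : a ≠ 0 ∨ b ≠ 0) :
    ∀ᵐ x : V × V, a • x.1 - b • x.2 ≠ 0 := by
  rw [Measure.volume_eq_prod]
  refine ae_linearMap_ne_zero _ (f := a • LinearMap.fst ℝ V V - b • LinearMap.snd ℝ V V) ?_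
  obtain ⟨v, hv⟩ := exists_ne (0 : V)
  intro hf
  have hfst := LinearMap.congr_fun hf (v, 0)
  have hsnd := LinearMap.congr_fun hf (0, v)
  simp only [LinearMap.sub_apply, LinearMap.smul_apply, LinearMap.fst_apply, LinearMap.snd_apply,
    smul_zero, sub_zero, zero_sub, neg_eq_zero, smul_eq_zero, LinearMap.zero_apply] at hfst hsnd
  tauto

end Gaussian

theorem weighted_bound_unit_gaussian (μ₁ : ℝ)
    (α β : ℝ) (hα : 0 ≤ α) (hβ : 0 ≤ β) :
    ∃ C > (0:ℝ), ∃ σ₀ ∈ Set.Ioo (0:ℝ) 1, ∀ σ ∈ Set.Ioo (0:ℝ) σ₀,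
      Real.sqrt (∫ x : R2 × R2,
          (Real.log (2 + ‖(1 - μ₁) • x.1 - μ₁ • x.2‖) ^ α /
              (1 + |Real.log (σ * ‖(1 - μ₁) • x.1 - μ₁ • x.2‖)|) ^ β) ^ 2 *
            ((Real.pi)⁻¹ * Real.exp (-‖x.1‖ ^ 2 / 2) * Real.exp (-‖x.2‖ ^ 2 / 2)) ^ 2)
        ≤ C * Real.log (1 / σ) ^ (-β) := by
  set q : R2 × R2 → R2 := fun x => (1 - μ₁) • x.1 - μ₁ • x.2
  set I := ∫ x : R2 × R2, ((1 + log (2 + ‖q x‖)) ^ (α + β)) ^ 2 *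
    (π⁻¹ * exp (-‖x.1‖ ^ 2 / 2) * exp (-‖x.2‖ ^ 2 / 2)) ^ 2
  refine ⟨√I + 1, by positivity, 1 / 2, by norm_num, fun σ ⟨hσ₀, hσ⟩ => ?_⟩
  have hL : 0 ≤ log (1 / σ) ^ (-β) :=
    rpow_nonneg (log_nonneg (by rw [le_div_iff₀ hσ₀]; linarith)) _
  have hweight_nonneg (x : R2 × R2) :
      0 ≤ log (2 + ‖q x‖) ^ α / (1 + |log (σ * ‖q x‖)|) ^ β := by
    have := log_nonneg (by linarith [norm_nonneg (q x)] : (1 : ℝ) ≤ 2 + ‖q x‖)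
    positivity
  have hweight_le : ∀ᵐ x : R2 × R2, log (2 + ‖q x‖) ^ α / (1 + |log (σ * ‖q x‖)|) ^ β ≤
      log (1 / σ) ^ (-β) * (1 + log (2 + ‖q x‖)) ^ (α + β) := by
    filter_upwards [ae_smul_fst_sub_smul_snd_ne_zero (V := R2) (a := 1 - μ₁) (b := μ₁)
      (by by_contra! h; linarith [h.1, h.2])] with x hx
    exact log_two_add_rpow_div_le hα hβ hσ₀ (by linarith) (norm_pos_iff.2 hx)
  calc _ ≤ log (1 / σ) ^ (-β) * √I := sqrt_integral_sq_mul_le hL (fun x => sq_nonneg _)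
          hweight_nonneg hweight_le
          (integrable_one_add_log_rpow_sq_mul_gaussian_sq _ _ (add_nonneg hα hβ))
    _ ≤ (√I + 1) * log (1 / σ) ^ (-β) := by
        rw [mul_comm]
        gcongr
        linarith
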